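/- arXiv:2209.01813 — 3 statements merged into one kernel-verified Lean document; each statement's English description precedes it below -/
import Mathlib

section
/- Let m ≥ 1 and let F_i, F_j ∈ ℝ^{m×2} be real matrices. Write F_iᵀF_j = [[a, b], [c, d]]. Then the infimum over all rotation matrices Q ∈ SO(2) of ‖F_j Q − F_i‖_F² equals tr(F_i F_iᵀ) + tr(F_j F_jᵀ) − 2·√((a + d)² + (c − b)²), and this infimum is attained. -/
open Matrix

/-- The Frobenius norm of a real matrix. -/
noncomputable def frobNorm {m n : ℕ} (A : Matrix (Fin m) (Fin n) ℝ) : ℝ :=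
  Real.sqrt (Matrix.trace (Aᵀ * A))

/-!
Since `Q` is orthogonal, `‖F_j Q - F_i‖_F² = ‖F_i‖_F² + ‖F_j‖_F² - 2 tr(F_iᵀ F_j Q)`.
A rotation is `Q = [[p, -q], [q, p]]` with `p² + q² = 1`, for which
`tr(F_iᵀ F_j Q) = (a + d) p + (b - c) q`.
By Cauchy–Schwarz this is at most `√((a + d)² + (b - c)²)`, with equality at
`(p, q) = (cos θ, sin θ)` for `θ = arg((a + d) + (b - c) i)`.
-/

lemma frobNorm_sq {m n : ℕ} (A : Matrix (Fin m) (Fin n) ℝ) :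
    frobNorm A ^ 2 = trace (Aᵀ * A) := by
  refine Real.sq_sqrt ?_
  simpa [conjTranspose_eq_transpose_of_trivial] using
    (posSemidef_conjTranspose_mul_self A).trace_nonneg

lemma trace_transpose_mul_self_mul_orthogonal_sub {m n : Type*} [Fintype m] [Fintype n]
    [DecidableEq n] (A B : Matrix m n ℝ) {Q : Matrix n n ℝ} (hQ : Qᵀ * Q = 1) :
    trace ((B * Q - A)ᵀ * (B * Q - A))
      = trace (A * Aᵀ) + trace (B * Bᵀ) - 2 * trace (Aᵀ * B * Q) := by
  have hBQ : trace ((B * Q)ᵀ * (B * Q)) = trace (B * Bᵀ) := by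
    rw [trace_mul_comm, transpose_mul, Matrix.mul_assoc, ← Matrix.mul_assoc Q,
      mul_eq_one_comm.mp hQ, Matrix.one_mul]
  have hcross : trace ((B * Q)ᵀ * A) = trace (Aᵀ * B * Q) := by
    rw [← trace_transpose, transpose_mul, transpose_transpose, Matrix.mul_assoc]
  rw [transpose_sub, Matrix.sub_mul, Matrix.mul_sub, Matrix.mul_sub, trace_sub, trace_sub,
    trace_sub, hBQ, hcross, trace_mul_comm Aᵀ A, ← Matrix.mul_assoc]
  ring

def rotationMatrix (p q : ℝ) : Matrix (Fin 2) (Fin 2) ℝ :=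
  !![p, -q; q, p]

lemma transpose_mul_self_eq_one_and_det_eq_one_iff (Q : Matrix (Fin 2) (Fin 2) ℝ) :
    Qᵀ * Q = 1 ∧ Q.det = 1 ↔ ∃ p q : ℝ, p ^ 2 + q ^ 2 = 1 ∧ Q = rotationMatrix p q := by
  constructor
  · rintro ⟨hQ, hdet⟩
    have h00 := congrFun₂ hQ 0 0
    have h11 := congrFun₂ hQ 1 1
    simp only [mul_apply, Fin.sum_univ_two, transpose_apply, one_apply_eq] at h00 h11
    rw [det_fin_two] at hdet
    have hsq : (Q 1 1 - Q 0 0) ^ 2 + (Q 0 1 + Q 1 0) ^ 2 = 0 := by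
      linear_combination h00 + h11 - 2 * hdet
    obtain ⟨h11', h01'⟩ := (add_eq_zero_iff_of_nonneg (sq_nonneg _) (sq_nonneg _)).1 hsq
    rw [sq_eq_zero_iff, sub_eq_zero] at h11'
    rw [sq_eq_zero_iff, add_eq_zero_iff_eq_neg] at h01'
    refine ⟨Q 0 0, Q 1 0, by linarith, ?_⟩
    ext i j
    fin_cases i <;> fin_cases j <;> simp [rotationMatrix, h11', h01']
  · rintro ⟨p, q, hpq, rfl⟩
    refine ⟨?_, ?_⟩
    · ext i j
      fin_cases i <;> fin_cases j <;>
        simp [rotationMatrix, mul_apply, Fin.sum_univ_two] <;> linarith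
    · rw [rotationMatrix, det_fin_two_of]; linarith

lemma trace_mul_rotationMatrix (M : Matrix (Fin 2) (Fin 2) ℝ) (p q : ℝ) :
    trace (M * rotationMatrix p q) = (M 0 0 + M 1 1) * p + (M 0 1 - M 1 0) * q := by
  rw [rotationMatrix, eta_fin_two M, mul_fin_two, trace_fin_two]
  simp only [of_apply, cons_val', cons_val_zero, cons_val_one, cons_val_fin_one]
  ring

lemma isGreatest_mul_add_mul_unit_circle (u v : ℝ) :
    IsGreatest {t | ∃ p q : ℝ, p ^ 2 + q ^ 2 = 1 ∧ t = u * p + v * q} √(u ^ 2 + v ^ 2) := by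
  constructor
  · let z : ℂ := ⟨u, v⟩
    have hu : ‖z‖ * Real.cos z.arg = u := Complex.norm_mul_cos_arg z
    have hv : ‖z‖ * Real.sin z.arg = v := Complex.norm_mul_sin_arg z
    have hz : ‖z‖ = √(u ^ 2 + v ^ 2) := Complex.norm_eq_sqrt_sq_add_sq z
    have hunit := Real.cos_sq_add_sin_sq z.arg
    refine ⟨Real.cos z.arg, Real.sin z.arg, hunit, ?_⟩
    linear_combination -hz - ‖z‖ * hunit + Real.cos z.arg * hu + Real.sin z.arg * hv
  · rintro t ⟨p, q, hpq, rfl⟩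
    exact (le_abs_self _).trans (Real.abs_le_sqrt (by nlinarith [sq_nonneg (u * q - v * p)]))

theorem stmt0_general (m : ℕ) (Fi Fj : Matrix (Fin m) (Fin 2) ℝ)
    (a b c d : ℝ)
    (ha : a = (Fiᵀ * Fj) 0 0) (hb : b = (Fiᵀ * Fj) 0 1)
    (hc : c = (Fiᵀ * Fj) 1 0) (hd : d = (Fiᵀ * Fj) 1 1) :
    IsLeast
      {x : ℝ | ∃ Q : Matrix (Fin 2) (Fin 2) ℝ,
        Qᵀ * Q = 1 ∧ Q.det = 1 ∧ x = (frobNorm (Fj * Q - Fi)) ^ 2}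
      (Matrix.trace (Fi * Fiᵀ) + Matrix.trace (Fj * Fjᵀ)
        - 2 * Real.sqrt ((a + d) ^ 2 + (c - b) ^ 2)) := by
  have hrot {p q : ℝ} (hpq : p ^ 2 + q ^ 2 = 1) :=
    (transpose_mul_self_eq_one_and_det_eq_one_iff (rotationMatrix p q)).2 ⟨p, q, hpq, rfl⟩
  have hdist {p q : ℝ} (hpq : p ^ 2 + q ^ 2 = 1) :
      frobNorm (Fj * rotationMatrix p q - Fi) ^ 2
        = trace (Fi * Fiᵀ) + trace (Fj * Fjᵀ) - 2 * ((a + d) * p + (b - c) * q) := by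
    rw [frobNorm_sq, trace_transpose_mul_self_mul_orthogonal_sub _ _ (hrot hpq).1,
      trace_mul_rotationMatrix, ha, hb, hc, hd]
  obtain ⟨⟨p, q, hpq, hmax⟩, hbound⟩ := isGreatest_mul_add_mul_unit_circle (a + d) (b - c)
  rw [show (c - b) ^ 2 = (b - c) ^ 2 by ring]
  constructor
  · exact ⟨rotationMatrix p q, (hrot hpq).1, (hrot hpq).2, by rw [hdist hpq, hmax]⟩
  · rintro x ⟨Q, hQ, hdet, rfl⟩
    obtain ⟨p, q, hpq, rfl⟩ := (transpose_mul_self_eq_one_and_det_eq_one_iff Q).1 ⟨hQ, hdet⟩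
    rw [hdist hpq]
    linarith [hbound ⟨p, q, hpq, rfl⟩]

/-- For `F_i, F_j ∈ ℝ^{m×2}` with `F_iᵀ F_j = [[a,b],[c,d]]`, the infimum over
rotations `Q ∈ SO(2)` of `‖F_j Q − F_i‖_F²` equals
`tr(F_i F_iᵀ) + tr(F_j F_jᵀ) − 2√((a+d)² + (c−b)²)`, and it is attained. -/
theorem stmt0 (m : ℕ) (hm : 1 ≤ m) (Fi Fj : Matrix (Fin m) (Fin 2) ℝ)
    (a b c d : ℝ)
    (ha : a = (Fiᵀ * Fj) 0 0) (hb : b = (Fiᵀ * Fj) 0 1)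
    (hc : c = (Fiᵀ * Fj) 1 0) (hd : d = (Fiᵀ * Fj) 1 1) :
    IsLeast
      {x : ℝ | ∃ Q : Matrix (Fin 2) (Fin 2) ℝ,
        Qᵀ * Q = 1 ∧ Q.det = 1 ∧ x = (frobNorm (Fj * Q - Fi)) ^ 2}
      (Matrix.trace (Fi * Fiᵀ) + Matrix.trace (Fj * Fjᵀ)
        - 2 * Real.sqrt ((a + d) ^ 2 + (c - b) ^ 2)) :=
  stmt0_general m Fi Fj a b c d ha hb hc hd
end

section
/- Let m ≥ 1 and let F_i, F_j ∈ ℝ^{m×2}. Write F_iᵀF_j = [[a, b], [c, d]]. Then tr(F_i F_iᵀ) + tr(F_j F_jᵀ) ≥ 2·√((a + d)² + (c − b)²); in particular the quantity d(G_i, G_j) = tr(G_i) + tr(G_j) − 2·√((a + d)² + (c − b)²), with G_i = F_i F_iᵀ and G_j = F_j F_jᵀ, is nonnegative. -/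
/-!
Read the `k`-th rows of `F_i` and `F_j` as complex numbers `z_k`, `w_k`. Then
`∑ conj z_k w_k = (a + d) + (b - c) i`, i.e. `√((a + d)² + (c − b)²)` is the modulus of the
Hermitian inner product `⟪z, w⟫` in `ℂ^m`, while `‖z‖² = tr(F_i F_iᵀ)` and `‖w‖² = tr(F_j F_jᵀ)`.
The claim is therefore Cauchy–Schwarz followed by AM–GM: `2 |⟪z, w⟫| ≤ 2 ‖z‖ ‖w‖ ≤ ‖z‖² + ‖w‖²`.
-/

open Matrix

theorem two_mul_norm_inner_le_norm_sq_add_norm_sq {𝕜 E : Type*} [RCLike 𝕜]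
    [SeminormedAddCommGroup E] [InnerProductSpace 𝕜 E] (x y : E) :
    2 * ‖inner 𝕜 x y‖ ≤ ‖x‖ ^ 2 + ‖y‖ ^ 2 :=
  calc 2 * ‖inner 𝕜 x y‖ ≤ 2 * (‖x‖ * ‖y‖) := by gcongr; exact norm_inner_le_norm x y
    _ ≤ ‖x‖ ^ 2 + ‖y‖ ^ 2 := by linarith [two_mul_le_add_sq ‖x‖ ‖y‖]

namespace Matrix

variable {ι : Type*} [Fintype ι]

noncomputable def rowsAsComplex (F : Matrix ι (Fin 2) ℝ) : EuclideanSpace ℂ ι :=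
  WithLp.toLp 2 fun k => ⟨F k 0, F k 1⟩

theorem norm_rowsAsComplex_sq (F : Matrix ι (Fin 2) ℝ) :
    ‖rowsAsComplex F‖ ^ 2 = trace (F * Fᵀ) := by
  simp only [rowsAsComplex, EuclideanSpace.norm_sq_eq, Complex.sq_norm, Complex.normSq_mk, trace,
    diag_apply, mul_apply, transpose_apply, Fin.sum_univ_two]

theorem inner_rowsAsComplex (F G : Matrix ι (Fin 2) ℝ) :
    inner ℂ (rowsAsComplex F) (rowsAsComplex G) =
      ⟨(Fᵀ * G) 0 0 + (Fᵀ * G) 1 1, (Fᵀ * G) 0 1 - (Fᵀ * G) 1 0⟩ := by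
  apply Complex.ext <;>
    simp only [rowsAsComplex, PiLp.inner_apply, RCLike.inner_apply', mul_apply, transpose_apply,
      Complex.mul_re, Complex.mul_im, Complex.conj_re, Complex.conj_im, Complex.re_sum,
      Complex.im_sum, ← Finset.sum_add_distrib, ← Finset.sum_sub_distrib] <;>
    exact Finset.sum_congr rfl fun _ _ => by ring

theorem two_mul_sqrt_le_trace_add_trace (F G : Matrix ι (Fin 2) ℝ) :
    2 * √(((Fᵀ * G) 0 0 + (Fᵀ * G) 1 1) ^ 2 + ((Fᵀ * G) 1 0 - (Fᵀ * G) 0 1) ^ 2)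
      ≤ trace (F * Fᵀ) + trace (G * Gᵀ) := by
  have h :=
    two_mul_norm_inner_le_norm_sq_add_norm_sq (𝕜 := ℂ) (rowsAsComplex F) (rowsAsComplex G)
  rw [inner_rowsAsComplex, norm_rowsAsComplex_sq, norm_rowsAsComplex_sq, Complex.norm_def,
    Complex.normSq_mk] at h
  convert h using 3
  ring

end Matrix

theorem stmt6_general (m : ℕ) (Fi Fj : Matrix (Fin m) (Fin 2) ℝ)
    (a b c d : ℝ)
    (ha : a = (Fiᵀ * Fj) 0 0) (hb : b = (Fiᵀ * Fj) 0 1)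
    (hc : c = (Fiᵀ * Fj) 1 0) (hd : d = (Fiᵀ * Fj) 1 1) :
    2 * Real.sqrt ((a + d) ^ 2 + (c - b) ^ 2)
        ≤ Matrix.trace (Fi * Fiᵀ) + Matrix.trace (Fj * Fjᵀ) ∧
    0 ≤ Matrix.trace (Fi * Fiᵀ) + Matrix.trace (Fj * Fjᵀ)
        - 2 * Real.sqrt ((a + d) ^ 2 + (c - b) ^ 2) := by
  subst ha hb hc hd
  have h := two_mul_sqrt_le_trace_add_trace Fi Fj
  exact ⟨h, sub_nonneg.mpr h⟩

/-- With `F_iᵀF_j = [[a,b],[c,d]]`,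
`tr(F_i F_iᵀ) + tr(F_j F_jᵀ) ≥ 2√((a+d)² + (c−b)²)`; in particular the
Gram-matrix distance `tr(G_i) + tr(G_j) − 2√((a+d)² + (c−b)²)` is nonnegative. -/
theorem stmt6 (m : ℕ) (hm : 1 ≤ m) (Fi Fj : Matrix (Fin m) (Fin 2) ℝ)
    (a b c d : ℝ)
    (ha : a = (Fiᵀ * Fj) 0 0) (hb : b = (Fiᵀ * Fj) 0 1)
    (hc : c = (Fiᵀ * Fj) 1 0) (hd : d = (Fiᵀ * Fj) 1 1) :
    2 * Real.sqrt ((a + d) ^ 2 + (c - b) ^ 2)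
        ≤ Matrix.trace (Fi * Fiᵀ) + Matrix.trace (Fj * Fjᵀ) ∧
    0 ≤ Matrix.trace (Fi * Fiᵀ) + Matrix.trace (Fj * Fjᵀ)
        - 2 * Real.sqrt ((a + d) ^ 2 + (c - b) ^ 2) :=
  stmt6_general m Fi Fj a b c d ha hb hc hd
end

section
/- Let A be a 2×2 real matrix with det A ≥ 0. Then the supremum over rotation matrices Q ∈ SO(2) of tr(A Q) equals the supremum over all orthogonal matrices Q ∈ O(2) of tr(A Q); that is, when det A ≥ 0 the optimal orthogonal alignment can be taken to be a rotation. -/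
/-!
Writing `A = !![a, b; c, d]`, a rotation `!![cos θ, -sin θ; sin θ, cos θ]` gives
`tr(A Q) = (a + d) cos θ + (b - c) sin θ`, whose maximum is `√((a + d)² + (b - c)²)`, while a
reflection `!![cos θ, sin θ; sin θ, -cos θ]` gives at most `√((a - d)² + (b + c)²)`. The two
squared bounds differ by `4 det A`, so for `det A ≥ 0` rotations already reach the maximum over `O(2)`.
-/

open Matrix Real

lemma mul_add_mul_le_sqrt_sq_add_sq {u v c s : ℝ} (h : c ^ 2 + s ^ 2 = 1) :
    u * c + v * s ≤ √(u ^ 2 + v ^ 2) :=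
  (le_abs_self _).trans <| Real.abs_le_sqrt <| by nlinarith [sq_nonneg (u * s - v * c)]

lemma exists_mul_cos_add_mul_sin_eq_sqrt (p q : ℝ) :
    ∃ θ : ℝ, p * cos θ + q * sin θ = √(p ^ 2 + q ^ 2) := by
  set z : ℂ := ⟨p, q⟩
  have hnorm : ‖z‖ = √(p ^ 2 + q ^ 2) := Complex.norm_eq_sqrt_sq_add_sq z
  have hcos := Complex.norm_mul_cos_arg z
  have hsin := Complex.norm_mul_sin_arg z
  refine ⟨z.arg, ?_⟩
  rw [← hnorm]
  linear_combination (-cos z.arg) * hcos - sin z.arg * hsin + ‖z‖ * cos_sq_add_sin_sq z.arg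

namespace Matrix

lemma trace_mul_fin_two (A Q : Matrix (Fin 2) (Fin 2) ℝ) :
    trace (A * Q) = A 0 0 * Q 0 0 + A 0 1 * Q 1 0 + A 1 0 * Q 0 1 + A 1 1 * Q 1 1 := by
  simp only [trace_fin_two, mul_apply, Fin.sum_univ_two]
  ring

lemma fin_two_rotation_or_reflection {Q : Matrix (Fin 2) (Fin 2) ℝ} (hQ : Qᵀ * Q = 1) :
    Q 0 0 ^ 2 + Q 1 0 ^ 2 = 1 ∧
      (Q 1 1 = Q 0 0 ∧ Q 0 1 = -Q 1 0 ∨ Q 1 1 = -Q 0 0 ∧ Q 0 1 = Q 1 0) := by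
  have h00 := congrFun (congrFun hQ 0) 0
  have h01 := congrFun (congrFun hQ 0) 1
  have h11 := congrFun (congrFun hQ 1) 1
  simp only [mul_apply, Fin.sum_univ_two, transpose_apply, one_apply_eq,
    one_apply_ne zero_ne_one] at h00 h01 h11
  have hdet : (Q.det - 1) * (Q.det + 1) = 0 := by
    rw [det_fin_two]
    linear_combination (Q 0 1 ^ 2 + Q 1 1 ^ 2) * h00 + h11 - (Q 0 0 * Q 0 1 + Q 1 0 * Q 1 1) * h01
  refine ⟨by linear_combination h00, ?_⟩
  rw [det_fin_two] at hdet
  rcases mul_eq_zero.1 hdet with hrot | hrefl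
  · -- `(Q₁₁ - Q₀₀)² + (Q₀₁ + Q₁₀)² = tr (QᵀQ) - 2 det Q = 0`
    left
    constructor <;> nlinarith [sq_nonneg (Q 1 1 - Q 0 0), sq_nonneg (Q 0 1 + Q 1 0)]
  · right
    constructor <;> nlinarith [sq_nonneg (Q 1 1 + Q 0 0), sq_nonneg (Q 0 1 - Q 1 0)]

lemma trace_mul_le_of_transpose_mul_self_eq_one {A Q : Matrix (Fin 2) (Fin 2) ℝ}
    (hA : 0 ≤ A.det) (hQ : Qᵀ * Q = 1) :
    trace (A * Q) ≤ √((A 0 0 + A 1 1) ^ 2 + (A 0 1 - A 1 0) ^ 2) := by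
  obtain ⟨hunit, ⟨hd, hb⟩ | ⟨hd, hb⟩⟩ := fin_two_rotation_or_reflection hQ <;>
    rw [trace_mul_fin_two, hd, hb]
  · calc _ = (A 0 0 + A 1 1) * Q 0 0 + (A 0 1 - A 1 0) * Q 1 0 := by ring
      _ ≤ _ := mul_add_mul_le_sqrt_sq_add_sq hunit
  · calc _ = (A 0 0 - A 1 1) * Q 0 0 + (A 0 1 + A 1 0) * Q 1 0 := by ring
      _ ≤ √((A 0 0 - A 1 1) ^ 2 + (A 0 1 + A 1 0) ^ 2) := mul_add_mul_le_sqrt_sq_add_sq hunit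
      _ ≤ _ := Real.sqrt_le_sqrt <| by rw [det_fin_two] at hA; nlinarith

noncomputable def rotation (θ : ℝ) : Matrix (Fin 2) (Fin 2) ℝ :=
  !![cos θ, -sin θ; sin θ, cos θ]

lemma rotation_mem_specialOrthogonalGroup (θ : ℝ) :
    rotation θ ∈ specialOrthogonalGroup (Fin 2) ℝ :=
  of_mem_specialOrthogonalGroup_fin_two_iff.2 ⟨rfl, rfl, by rw [neg_sq, cos_sq_add_sin_sq]⟩

lemma exists_rotation_trace_mul_eq (A : Matrix (Fin 2) (Fin 2) ℝ) :
    ∃ θ : ℝ, trace (A * rotation θ) = √((A 0 0 + A 1 1) ^ 2 + (A 0 1 - A 1 0) ^ 2) := by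
  obtain ⟨θ, hθ⟩ := exists_mul_cos_add_mul_sin_eq_sqrt (A 0 0 + A 1 1) (A 0 1 - A 1 0)
  refine ⟨θ, ?_⟩
  rw [trace_mul_fin_two, ← hθ]
  simp only [rotation, of_apply, cons_val', cons_val_zero, cons_val_one, empty_val',
    cons_val_fin_one]
  ring

end Matrix

/-- If `det A ≥ 0`, the supremum of `tr(A Q)` over rotations `Q ∈ SO(2)` equals
the supremum over all orthogonal matrices `Q ∈ O(2)`. -/
theorem stmt13 (A : Matrix (Fin 2) (Fin 2) ℝ) (hdet : 0 ≤ A.det) :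
    sSup {x : ℝ | ∃ Q : Matrix (Fin 2) (Fin 2) ℝ,
        Qᵀ * Q = 1 ∧ Q.det = 1 ∧ x = Matrix.trace (A * Q)}
      = sSup {x : ℝ | ∃ Q : Matrix (Fin 2) (Fin 2) ℝ,
        Qᵀ * Q = 1 ∧ x = Matrix.trace (A * Q)} := by
  obtain ⟨θ, hθ⟩ := exists_rotation_trace_mul_eq A
  obtain ⟨hO, hdetQ⟩ := mem_specialOrthogonalGroup_iff.1 (rotation_mem_specialOrthogonalGroup θ)
  have hQ := (mem_orthogonalGroup_iff' _ _).1 hO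
  have hle : ∀ Q : Matrix (Fin 2) (Fin 2) ℝ, Qᵀ * Q = 1 → trace (A * Q) ≤ trace (A * rotation θ) :=
    fun Q hQ ↦ hθ ▸ trace_mul_le_of_transpose_mul_self_eq_one hdet hQ
  refine (IsGreatest.csSup_eq (a := trace (A * rotation θ)) ?_).trans
    (IsGreatest.csSup_eq ?_).symm
  · exact ⟨⟨_, hQ, hdetQ, rfl⟩, fun _ ⟨Q, hQ, _, hx⟩ ↦ hx ▸ hle Q hQ⟩
  · exact ⟨⟨_, hQ, rfl⟩, fun _ ⟨Q, hQ, hx⟩ ↦ hx ▸ hle Q hQ⟩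
end
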